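/- arXiv:2111.07170 — 2 statements merged into one kernel-verified Lean document; each statement's English description precedes it below -/
import Mathlib

section
/- (Lemma 1, Jacobian of the modified Cholesky map.) Let φ : ℝ^{n(n+1)/2} → ℝ^{n(n+1)/2} be the map whose input coordinates are indexed by pairs (i,j) with 1 ≤ j ≤ i ≤ n, which sends t = (t_{ij})_{i≥j} to the on-and-below-diagonal entries (w_{ij})_{i≥j} of W = Tᵀ T̃ T, where T is the unit lower triangular matrix with below-diagonal entries t_{ij} (j < i) and T̃ = diag(t_{11},…,t_{nn}). Then φ is differentiable everywhere and the absolute value of the determinant of its derivative satisfies |det Dφ(t)| = Π_{i=1}^{n} |t_{ii}|^{i-1} for every t. In particular, when all t_{ii} > 0, the Jacobian determinant of the transformation from (t_{ij}) to (w_{ij}) is Π_{i=1}^{n} t_{ii}^{i-1} in absolute value. -/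
open Matrix Finset

/-- Index set for the on-and-below-diagonal entries of an `n × n` matrix,
of cardinality `n(n+1)/2`. -/
abbrev LowerIdx (n : ℕ) := {p : Fin n × Fin n // p.2 ≤ p.1}

/-- The unit lower triangular matrix with below-diagonal entries `t_{ij}`, `j < i`. -/
noncomputable def unitLT (n : ℕ) (t : LowerIdx n → ℝ) : Matrix (Fin n) (Fin n) ℝ :=
  fun i j => if h : j < i then t ⟨(i, j), h.le⟩ else if i = j then 1 else 0

/-- The diagonal entries `t_{ii}` of `T̃`. -/
noncomputable def diagEntries (n : ℕ) (t : LowerIdx n → ℝ) : Fin n → ℝ :=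
  fun i => t ⟨(i, i), le_refl i⟩

/-- The map `φ` sending the coordinates `t = (t_{ij})_{i ≥ j}` to the
on-and-below-diagonal entries of `W = Tᵀ T̃ T`. -/
noncomputable def cholNLmap (n : ℕ) (t : LowerIdx n → ℝ) : LowerIdx n → ℝ :=
  fun p => ((unitLT n t)ᵀ * Matrix.diagonal (diagEntries n t) * unitLT n t) p.1.1 p.1.2

/- ### Auxiliary machinery -/

/-- Derivative of `t ↦ unitLT n t k a` as a continuous linear map. -/
noncomputable def cholDU (n : ℕ) (k a : Fin n) : (LowerIdx n → ℝ) →L[ℝ] ℝ :=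
  if h : a < k then ContinuousLinearMap.proj (⟨(k, a), h.le⟩ : LowerIdx n) else 0

/-- The derivative of `cholNLmap n` at `t`, componentwise. -/
noncomputable def cholD (n : ℕ) (t : LowerIdx n → ℝ) (p : LowerIdx n) :
    (LowerIdx n → ℝ) →L[ℝ] ℝ :=
  ∑ k : Fin n,
    ((unitLT n t k p.1.1 * diagEntries n t k) • cholDU n k p.1.2
      + unitLT n t k p.1.2 •
        (unitLT n t k p.1.1 •
            (ContinuousLinearMap.proj (⟨(k, k), le_refl k⟩ : LowerIdx n) :
              (LowerIdx n → ℝ) →L[ℝ] ℝ)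
          + diagEntries n t k • cholDU n k p.1.1))

lemma unitLT_diag (n : ℕ) (t : LowerIdx n → ℝ) (k : Fin n) : unitLT n t k k = 1 := by
  simp [unitLT]

lemma unitLT_zero (n : ℕ) (t : LowerIdx n → ℝ) {k a : Fin n} (h : k < a) :
    unitLT n t k a = 0 := by
  rw [unitLT]
  rw [dif_neg (by omega), if_neg (by omega)]

lemma hasFDerivAt_unitLT (n : ℕ) (k a : Fin n) (t : LowerIdx n → ℝ) :
    HasFDerivAt (fun t => unitLT n t k a) (cholDU n k a) t := by
  by_cases h : a < k
  · have : (fun t : LowerIdx n → ℝ => unitLT n t k a)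
        = fun t : LowerIdx n → ℝ => t ⟨(k, a), h.le⟩ := by
      funext t; rw [unitLT, dif_pos h]
    rw [this, cholDU, dif_pos h]
    exact hasFDerivAt_apply _ t
  · have : (fun t : LowerIdx n → ℝ => unitLT n t k a)
        = fun _ : LowerIdx n → ℝ => (if k = a then (1:ℝ) else 0) := by
      funext t; rw [unitLT, dif_neg h]
    rw [this, cholDU, dif_neg h]
    exact hasFDerivAt_const (if k = a then (1:ℝ) else 0) t

lemma hasFDerivAt_diagEntries (n : ℕ) (k : Fin n) (t : LowerIdx n → ℝ) :
    HasFDerivAt (fun t => diagEntries n t k)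
      ((ContinuousLinearMap.proj (⟨(k, k), le_refl k⟩ : LowerIdx n)) :
        (LowerIdx n → ℝ) →L[ℝ] ℝ) t := by
  simp only [diagEntries]
  exact hasFDerivAt_apply _ t

lemma cholNLmap_eq (n : ℕ) (t : LowerIdx n → ℝ) (p : LowerIdx n) :
    cholNLmap n t p
      = ∑ k : Fin n, (unitLT n t k p.1.1 * diagEntries n t k) * unitLT n t k p.1.2 := by
  rw [cholNLmap, Matrix.mul_apply]
  simp [Matrix.mul_diagonal, Matrix.transpose_apply]

lemma cholHasFDeriv (n : ℕ) (t : LowerIdx n → ℝ) :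
    HasFDerivAt (cholNLmap n) (ContinuousLinearMap.pi (cholD n t)) t := by
  apply hasFDerivAt_pi''
  intro p
  rw [ContinuousLinearMap.proj_pi]
  have heq : (fun t => cholNLmap n t p)
      = fun t => ∑ k : Fin n, (unitLT n t k p.1.1 * diagEntries n t k) * unitLT n t k p.1.2 :=
    funext fun t => cholNLmap_eq n t p
  rw [heq, cholD]
  exact HasFDerivAt.fun_sum fun k _ =>
    ((hasFDerivAt_unitLT n k p.1.1 t).mul (hasFDerivAt_diagEntries n k t)).mul
      (hasFDerivAt_unitLT n k p.1.2 t)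

lemma cholDU_single (n : ℕ) (k c : Fin n) (q : LowerIdx n) :
    cholDU n k c (fun q' => if q' = q then 1 else 0)
      = if c < k ∧ q.1.1 = k ∧ q.1.2 = c then 1 else 0 := by
  rw [cholDU]
  by_cases h : c < k
  · rw [dif_pos h, ContinuousLinearMap.proj_apply]
    by_cases h2 : (⟨(k, c), h.le⟩ : LowerIdx n) = q
    · have hq1 : q.1.1 = k := by rw [← h2]
      have hq2 : q.1.2 = c := by rw [← h2]
      rw [if_pos h2, if_pos ⟨h, hq1, hq2⟩]
    · rw [if_neg h2, if_neg]
      rintro ⟨-, h1, h2'⟩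
      exact h2 (by apply Subtype.ext; apply Prod.ext <;> simp [h1, h2'])
  · rw [dif_neg h, if_neg (fun hc => h hc.1)]
    rfl

lemma single_diag (n : ℕ) (k : Fin n) (q : LowerIdx n) :
    (if (⟨(k, k), le_refl k⟩ : LowerIdx n) = q then (1:ℝ) else 0)
      = if q.1.1 = k ∧ q.1.2 = k then 1 else 0 := by
  by_cases h : (⟨(k, k), le_refl k⟩ : LowerIdx n) = q
  · have hq1 : q.1.1 = k := by rw [← h]
    have hq2 : q.1.2 = k := by rw [← h]
    rw [if_pos h, if_pos ⟨hq1, hq2⟩]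
  · rw [if_neg h, if_neg]
    rintro ⟨h1, h2⟩
    exact h (by apply Subtype.ext; apply Prod.ext <;> simp [h1, h2])

lemma cholD_single (n : ℕ) (t : LowerIdx n → ℝ) (p q : LowerIdx n) :
    cholD n t p (fun q' => if q' = q then 1 else 0)
      = ∑ k : Fin n,
          ((unitLT n t k p.1.1 * diagEntries n t k)
              * (if p.1.2 < k ∧ q.1.1 = k ∧ q.1.2 = p.1.2 then 1 else 0)
            + unitLT n t k p.1.2 *
              (unitLT n t k p.1.1 * (if q.1.1 = k ∧ q.1.2 = k then 1 else 0)
                + diagEntries n t k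
                    * (if p.1.1 < k ∧ q.1.1 = k ∧ q.1.2 = p.1.1 then 1 else 0))) := by
  rw [cholD, ContinuousLinearMap.sum_apply]
  refine Finset.sum_congr rfl fun k _ => ?_
  rw [ContinuousLinearMap.add_apply, ContinuousLinearMap.smul_apply,
    ContinuousLinearMap.smul_apply, ContinuousLinearMap.add_apply,
    ContinuousLinearMap.smul_apply, ContinuousLinearMap.smul_apply,
    ContinuousLinearMap.proj_apply, cholDU_single, cholDU_single]
  simp only [smul_eq_mul, single_diag]

/-- weight function for block triangularity -/
def cholβ (n : ℕ) (q : LowerIdx n) : ℕ := q.1.2.1 + q.1.1.1 * (n + 1)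

lemma cholβ_inj (n : ℕ) : Function.Injective (cholβ n) := by
  intro x y h
  have hx2 : x.1.2.1 < n + 1 := Nat.lt_succ_of_lt x.1.2.isLt
  have hy2 : y.1.2.1 < n + 1 := Nat.lt_succ_of_lt y.1.2.isLt
  rw [cholβ, cholβ] at h
  have h2 : x.1.2.1 = y.1.2.1 := by
    have := congrArg (· % (n + 1)) h
    simpa [Nat.add_mul_mod_self_right, Nat.mod_eq_of_lt hx2, Nat.mod_eq_of_lt hy2] using this
  have h1 : x.1.1.1 = y.1.1.1 := by
    have := congrArg (· / (n + 1)) h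
    simpa [Nat.add_mul_div_right _ _ (Nat.succ_pos n), Nat.div_eq_of_lt hx2,
      Nat.div_eq_of_lt hy2] using this
  exact Subtype.ext (Prod.ext (Fin.ext h1) (Fin.ext h2))

lemma cholβ_lt_cases {n : ℕ} {p q : LowerIdx n} (h : cholβ n q < cholβ n p) :
    q.1.1 < p.1.1 ∨ (q.1.1 = p.1.1 ∧ q.1.2 < p.1.2) := by
  rw [cholβ, cholβ] at h
  have hq2 : q.1.2.1 ≤ n := Nat.le_of_lt_succ (Nat.lt_succ_of_lt q.1.2.isLt)
  have hp2 : p.1.2.1 ≤ n := Nat.le_of_lt_succ (Nat.lt_succ_of_lt p.1.2.isLt)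
  have hle : q.1.1.1 ≤ p.1.1.1 := by
    by_contra hc
    push_neg at hc
    have hm : (p.1.1.1 + 1) * (n + 1) ≤ q.1.1.1 * (n + 1) := Nat.mul_le_mul_right _ hc
    nlinarith
  rcases Nat.lt_or_ge q.1.1.1 p.1.1.1 with h1 | h1
  · exact Or.inl h1
  · have he : q.1.1.1 = p.1.1.1 := le_antisymm hle h1
    right
    refine ⟨Fin.ext he, ?_⟩
    rw [Fin.lt_def]
    rw [he] at h
    omega

lemma cholD_offdiag (n : ℕ) (t : LowerIdx n → ℝ) (p q : LowerIdx n)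
    (h : cholβ n q < cholβ n p) :
    cholD n t p (fun q' => if q' = q then 1 else 0) = 0 := by
  rw [cholD_single]
  apply Finset.sum_eq_zero
  intro k _
  rcases cholβ_lt_cases h with hlt | ⟨heq, hlt⟩
  · -- q.1.1 < p.1.1
    have hC3 : ¬(p.1.1 < k ∧ q.1.1 = k ∧ q.1.2 = p.1.1) := by
      rintro ⟨h1, h2, -⟩
      rw [h2] at hlt
      exact absurd h1 (not_lt.2 hlt.le)
    rw [if_neg hC3, mul_zero, add_zero]
    by_cases hk : q.1.1 = k
    · have hka : k < p.1.1 := hk ▸ hlt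
      rw [unitLT_zero n t hka]
      ring
    · rw [if_neg (fun hc => hk hc.2.1), if_neg (fun hc => hk hc.1)]
      ring
  · -- q.1.1 = p.1.1 and q.1.2 < p.1.2
    have hb : p.1.2 ≤ p.1.1 := p.2
    have hC1 : ¬(p.1.2 < k ∧ q.1.1 = k ∧ q.1.2 = p.1.2) := by
      rintro ⟨-, -, h3⟩
      rw [h3] at hlt
      exact lt_irrefl _ hlt
    have hC2 : ¬(q.1.1 = k ∧ q.1.2 = k) := by
      rintro ⟨h1, h2⟩
      rw [h1] at heq
      rw [h2, heq] at hlt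
      exact absurd hb (not_le.2 hlt)
    have hC3 : ¬(p.1.1 < k ∧ q.1.1 = k ∧ q.1.2 = p.1.1) := by
      rintro ⟨h1, h2, -⟩
      rw [← h2, heq] at h1
      exact lt_irrefl _ h1
    rw [if_neg hC1, if_neg hC2, if_neg hC3]
    ring

lemma cholD_diag (n : ℕ) (t : LowerIdx n → ℝ) (p : LowerIdx n) :
    cholD n t p (fun q' => if q' = p then 1 else 0)
      = if p.1.2 = p.1.1 then 1 else t ⟨(p.1.1, p.1.1), le_refl _⟩ := by
  rw [cholD_single]
  rw [Finset.sum_eq_single_of_mem p.1.1 (Finset.mem_univ _)]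
  · have hC3 : ¬(p.1.1 < p.1.1 ∧ p.1.1 = p.1.1 ∧ p.1.2 = p.1.1) := fun hc => lt_irrefl _ hc.1
    rw [if_neg hC3, mul_zero, add_zero, unitLT_diag]
    by_cases hd : p.1.2 = p.1.1
    · have hC1 : ¬(p.1.2 < p.1.1 ∧ p.1.1 = p.1.1 ∧ p.1.2 = p.1.2) := by
        rintro ⟨h1, -, -⟩; rw [hd] at h1; exact lt_irrefl _ h1
      rw [if_neg hC1, if_pos ⟨rfl, hd⟩, if_pos hd, hd, unitLT_diag]
      ring
    · have hlt : p.1.2 < p.1.1 := lt_of_le_of_ne p.2 hd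
      rw [if_pos ⟨hlt, rfl, rfl⟩, if_neg (fun hc => hd hc.2), if_neg hd]
      simp [diagEntries]
  · intro k _ hk
    have h1 : ¬(p.1.2 < k ∧ p.1.1 = k ∧ p.1.2 = p.1.2) := fun hc => hk hc.2.1.symm
    have h2 : ¬(p.1.1 = k ∧ p.1.2 = k) := fun hc => hk hc.1.symm
    have h3 : ¬(p.1.1 < k ∧ p.1.1 = k ∧ p.1.2 = p.1.1) := fun hc => hk hc.2.1.symm
    rw [if_neg h1, if_neg h2, if_neg h3]
    ring

lemma chol_count (n : ℕ) (F : Fin n → ℝ) :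
    (∏ p : LowerIdx n, if p.1.2 = p.1.1 then 1 else F p.1.1) = ∏ i : Fin n, F i ^ (i : ℕ) := by
  rw [← Finset.prod_subtype (Finset.univ.filter (fun x : Fin n × Fin n => x.2 ≤ x.1))
    (by simp) (fun x => if x.2 = x.1 then 1 else F x.1)]
  rw [Finset.prod_filter]
  rw [Fintype.prod_prod_type]
  refine Finset.prod_congr rfl fun i _ => ?_
  have hrw : ∀ j : Fin n,
      (if j ≤ i then (if j = i then (1:ℝ) else F i) else 1) = if j < i then F i else 1 := by
    intro j
    rcases lt_trichotomy j i with h | h | h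
    · rw [if_pos h.le, if_neg h.ne, if_pos h]
    · rw [if_pos h.le, if_pos h, if_neg (lt_irrefl _ ∘ (h ▸ ·))]
    · rw [if_neg (not_le.2 h), if_neg (not_lt.2 h.le)]
  simp only [hrw]
  rw [Finset.prod_ite, Finset.prod_const, Finset.prod_const_one, mul_one]
  congr 1
  have : Finset.univ.filter (fun j : Fin n => j < i) = Finset.Iio i := by
    ext j; simp
  rw [this, Fin.card_Iio]

/-- Lemma 1: the map `φ` is differentiable everywhere and the
absolute value of its Jacobian determinant at `t` is `∏ i |t_{ii}|^{i-1}`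
(with 1-based indexing; here the index `i : Fin n` is 0-based so the
exponent is `(i : ℕ)`). -/
theorem jacobian_of_modified_cholesky_map (n : ℕ) (hn : 1 ≤ n) :
    Differentiable ℝ (cholNLmap n) ∧
    ∀ t : LowerIdx n → ℝ,
      |LinearMap.det ((fderiv ℝ (cholNLmap n) t).toLinearMap)|
        = ∏ i : Fin n, |t ⟨(i, i), le_refl i⟩| ^ (i : ℕ) := by
  constructor
  · exact fun t => (cholHasFDeriv n t).differentiableAt
  · intro t
    rw [(cholHasFDeriv n t).fderiv]
    rw [← LinearMap.det_toMatrix'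
      ((ContinuousLinearMap.pi (cholD n t) : (LowerIdx n → ℝ) →L[ℝ] LowerIdx n → ℝ) :
        (LowerIdx n → ℝ) →ₗ[ℝ] LowerIdx n → ℝ)]
    set M := LinearMap.toMatrix'
      ((ContinuousLinearMap.pi (cholD n t) : (LowerIdx n → ℝ) →L[ℝ] LowerIdx n → ℝ) :
        (LowerIdx n → ℝ) →ₗ[ℝ] LowerIdx n → ℝ) with hMdef
    have hM : ∀ p q : LowerIdx n,
        M p q = cholD n t p (fun q' => if q' = q then 1 else 0) := by
      intro p q
      rw [hMdef, LinearMap.toMatrix'_apply]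
      show cholD n t p (Pi.single q 1) = _
      congr 1; funext q'; rw [Pi.single_apply]
    letI lo : LinearOrder (LowerIdx n) := LinearOrder.lift' (cholβ n) (cholβ_inj n)
    have htri : @Matrix.BlockTriangular (LowerIdx n) (LowerIdx n) ℝ lo.toLT _ M id := by
      intro p q h
      have hβ : cholβ n q < cholβ n p := by
        rw [@lt_iff_le_not_ge _ lo.toPreorder] at h
        have h1 : cholβ n q ≤ cholβ n p := h.1
        have h2 : ¬ cholβ n p ≤ cholβ n q := h.2
        exact lt_iff_le_not_ge.2 ⟨h1, h2⟩
      rw [hM]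
      exact cholD_offdiag n t p q hβ
    rw [Matrix.det_of_upperTriangular (h := htri)]
    rw [Finset.abs_prod]
    have : ∀ p : LowerIdx n,
        |M p p| = if p.1.2 = p.1.1 then 1 else |t ⟨(p.1.1, p.1.1), le_refl _⟩| := by
      intro p
      rw [hM, cholD_diag]
      split_ifs
      · exact abs_one
      · rfl
    simp only [this]
    exact chol_count n (fun i => |t ⟨(i, i), le_refl i⟩|)
end

section
/- (Key kernel identity for Proposition 1.) Let n ≥ 1, ν₀ ∈ ℝ, and s_1,…,s_n > 0 with S = diag(s_1²,…,s_n²). Let t = (t_{ij})_{1 ≤ j ≤ i ≤ n} with all t_{ii} > 0, let T be the unit lower triangular matrix with below-diagonal entries t_{ij}, T̃ = diag(t_{11},…,t_{nn}), and W = Tᵀ T̃ T. Then (Π_{i=1}^{n} t_{ii}^{(ν₀+i-n)/2 − 1} e^{−(s_i²/2) t_{ii}}) · (Π_{i=2}^{n} t_{ii}^{(i-1)/2} e^{−(1/2) Σ_{j=1}^{i-1} t_{ij}² t_{ii} s_j²}) = det(W)^{(ν₀−n−1)/2} e^{−(1/2) tr(S W)} · Π_{i=1}^{n} t_{ii}^{i-1}.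 -/
open Matrix Finset Real

/-! Since `T` is unit lower triangular, `det W = ∏ tᵢᵢ` and
`tr (S W) = ∑ₖ tₖₖ (sₖ² + ∑_{j<k} tₖⱼ² sⱼ²)`. Both sides therefore split into one factor per
index `i`, and these factors agree because the exponents of `tᵢᵢ` add up:
`(ν₀ + i - n)/2 - 1 + (i - 1)/2 = (ν₀ - n - 1)/2 + (i - 1)`. -/

namespace Matrix

theorem trace_diagonal_mul_transpose_mul_diagonal_mul {ι R : Type*} [Fintype ι] [DecidableEq ι]
    [CommRing R] (a d : ι → R) (T : Matrix ι ι R) :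
    (diagonal a * (Tᵀ * diagonal d * T)).trace = ∑ k, d k * ∑ i, a i * T k i ^ 2 := by
  simp only [trace, diag, diagonal_mul, mul_apply (M := Tᵀ * diagonal d), mul_diagonal,
    transpose_apply, mul_sum]
  rw [sum_comm]
  refine sum_congr rfl fun k _ => sum_congr rfl fun i _ => ?_
  ring

variable {ι R : Type*} [Fintype ι] [LinearOrder ι] [CommRing R] {T : Matrix ι ι R}

theorem det_eq_one_of_isLowerTriangular (hT : T.IsLowerTriangular) (hdiag : ∀ i, T i i = 1) :
    T.det = 1 := by
  simp [det_of_isLowerTriangular T hT, hdiag]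

theorem det_transpose_mul_diagonal_mul_of_isLowerTriangular (hT : T.IsLowerTriangular)
    (hdiag : ∀ i, T i i = 1) (d : ι → R) :
    (Tᵀ * diagonal d * T).det = ∏ i, d i := by
  rw [det_mul, det_mul, det_transpose, det_eq_one_of_isLowerTriangular hT hdiag, det_diagonal,
    one_mul, mul_one]

theorem sum_mul_sq_row_of_isLowerTriangular (hT : T.IsLowerTriangular)
    (hdiag : ∀ i, T i i = 1) (a : ι → R) (k : ι) :
    ∑ i, a i * T k i ^ 2 = a k + ∑ j ∈ univ.filter (· < k), a j * T k j ^ 2 := by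
  rw [← sum_filter_add_sum_filter_not univ (· < k), add_comm]
  congr 1
  refine (sum_eq_single k (fun i hi hik => ?_) (by simp)).trans (by simp [hdiag])
  have hki : k < i := lt_of_le_of_ne (not_lt.mp (mem_filter.mp hi).2) (Ne.symm hik)
  simp [hT hki]

end Matrix

/-- The paper's 1-based index `i` is `(i : ℕ) + 1` here. The paper's second product starts at
`i = 2`; its `i = 1` factor is `1`. -/
theorem kernel_identity_for_wishart_general
    (n : ℕ) (ν₀ : ℝ) (s d : Fin n → ℝ)
    (hd : ∀ i, 0 < d i)
    (T : Matrix (Fin n) (Fin n) ℝ)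
    (hTdiag : ∀ i, T i i = 1)
    (hTupper : ∀ i j : Fin n, i < j → T i j = 0) :
    (∏ i : Fin n,
        d i ^ ((ν₀ + ((i : ℝ) + 1) - n) / 2 - 1) * Real.exp (-((s i) ^ 2 / 2) * d i))
      * (∏ i : Fin n,
        d i ^ ((i : ℝ) / 2)
          * Real.exp (-(1 / 2) *
              ∑ j ∈ Finset.univ.filter (fun j : Fin n => j < i),
                (T i j) ^ 2 * d i * (s j) ^ 2))
      = (Tᵀ * Matrix.diagonal d * T).det ^ ((ν₀ - n - 1) / 2)
          * Real.exp (-(1 / 2) *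
              (Matrix.diagonal (fun i => (s i) ^ 2) * (Tᵀ * Matrix.diagonal d * T)).trace)
          * ∏ i : Fin n, d i ^ (i : ℕ) := by
  have hT : T.IsLowerTriangular := fun i j hij => hTupper i j hij
  have hexp : Real.exp (-(1 / 2) *
      (Matrix.diagonal (fun i => (s i) ^ 2) * (Tᵀ * Matrix.diagonal d * T)).trace)
      = ∏ i, Real.exp (-((s i) ^ 2 / 2) * d i) * Real.exp (-(1 / 2) *
          ∑ j ∈ univ.filter (fun j : Fin n => j < i), (T i j) ^ 2 * d i * (s j) ^ 2) := by
    simp only [← Real.exp_add, ← Real.exp_sum, trace_diagonal_mul_transpose_mul_diagonal_mul,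
      sum_mul_sq_row_of_isLowerTriangular hT hTdiag, mul_sum]
    congr 1
    refine sum_congr rfl fun k _ => ?_
    simp only [mul_add, mul_sum]
    congr 1
    · ring
    · exact sum_congr rfl fun j _ => by ring
  have hpow : ∀ i : Fin n, d i ^ ((ν₀ + ((i : ℝ) + 1) - n) / 2 - 1) * d i ^ ((i : ℝ) / 2)
      = d i ^ ((ν₀ - n - 1) / 2) * d i ^ (i : ℕ) := fun i => by
    rw [← Real.rpow_natCast, ← Real.rpow_add (hd i), ← Real.rpow_add (hd i)]
    ring_nf
  rw [det_transpose_mul_diagonal_mul_of_isLowerTriangular hT hTdiag, hexp,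
    ← Real.finsetProd_rpow _ _ fun i _ => (hd i).le, ← prod_mul_distrib, ← prod_mul_distrib,
    ← prod_mul_distrib]
  refine prod_congr rfl fun i _ => ?_
  linear_combination (Real.exp (-((s i) ^ 2 / 2) * d i) * Real.exp (-(1 / 2) *
      ∑ j ∈ univ.filter (fun j : Fin n => j < i), (T i j) ^ 2 * d i * (s j) ^ 2)) * hpow i

/-- key kernel identity for Proposition 1. With 1-based index
`i` in the paper corresponding to the 0-based `i : Fin n` here (so `i` in the
paper is `(i : ℕ) + 1` and the exponent `i - 1` is `(i : ℕ)`):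
`(∏ i t_{ii}^{(ν₀+i-n)/2-1} e^{-(s_i²/2)t_{ii}}) ·
 (∏ i t_{ii}^{(i-1)/2} e^{-(1/2)∑_{j<i} t_{ij}² t_{ii} s_j²})
 = det(W)^{(ν₀-n-1)/2} e^{-(1/2)tr(SW)} ∏ i t_{ii}^{i-1}`.
(The second product in the paper starts at `i = 2`; the omitted `i = 1`
factor equals `1`, so the product over all `i` agrees with it.) -/
theorem kernel_identity_for_wishart
    (n : ℕ) (hn : 1 ≤ n) (ν₀ : ℝ) (s d : Fin n → ℝ)
    (hs : ∀ i, 0 < s i) (hd : ∀ i, 0 < d i)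
    (T : Matrix (Fin n) (Fin n) ℝ)
    (hTdiag : ∀ i, T i i = 1)
    (hTupper : ∀ i j : Fin n, i < j → T i j = 0) :
    (∏ i : Fin n,
        d i ^ ((ν₀ + ((i : ℝ) + 1) - n) / 2 - 1) * Real.exp (-((s i) ^ 2 / 2) * d i))
      * (∏ i : Fin n,
        d i ^ ((i : ℝ) / 2)
          * Real.exp (-(1 / 2) *
              ∑ j ∈ Finset.univ.filter (fun j : Fin n => j < i),
                (T i j) ^ 2 * d i * (s j) ^ 2))
      = (Tᵀ * Matrix.diagonal d * T).det ^ ((ν₀ - n - 1) / 2)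
          * Real.exp (-(1 / 2) *
              (Matrix.diagonal (fun i => (s i) ^ 2) * (Tᵀ * Matrix.diagonal d * T)).trace)
          * ∏ i : Fin n, d i ^ (i : ℕ) :=
  kernel_identity_for_wishart_general n ν₀ s d hd T hTdiag hTupper
end
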